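/- Theorem A (pointwise sparse domination linear in complexity): let α be a Carleson sequence on a dyadic cube P₀ and m ≥ 0. For every k-tuple of nonnegative integrable functions f₁,…,f_k on P₀ there exists a sparse collection 𝒮 ⊆ 𝒟(P₀) such that 𝒜^m_{P₀,α} f⃗(x) ≤ C₂ (m+1) ‖α‖_{Car(P₀)} Σ_{Q∈𝒮} (∏_{i=1}^k ⟨f_i⟩_Q) 1_Q(x) for all x ∈ P₀, with C₂ depending only on k and d. -/

import Mathlib

open MeasureTheory ENNReal Set
noncomputable section

/-- A dyadic cube in `ℝ^d`: generation `gen` (side length `2^{-gen}`) and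
position `pos` (lower-left corner `pos * 2^{-gen}`). -/
structure DyadicCube (d : ℕ) where
  gen : ℤ
  pos : Fin d → ℤ

namespace DyadicCube
variable {d : ℕ}

/-- The half-open cube represented by `Q`. -/
def toSet (Q : DyadicCube d) : Set (Fin d → ℝ) :=
  {x | ∀ i, (Q.pos i : ℝ) * (2 : ℝ) ^ (-Q.gen) ≤ x i ∧
        x i < ((Q.pos i : ℝ) + 1) * (2 : ℝ) ^ (-Q.gen)}

/-- Lebesgue measure of the cube. -/
def vol (Q : DyadicCube d) : ℝ≥0∞ := volume Q.toSet

/-- The dyadic parent of a cube. -/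
def parent (Q : DyadicCube d) : DyadicCube d :=
  ⟨Q.gen - 1, fun i => Int.fdiv (Q.pos i) 2⟩

/-- The `m`-th dyadic ancestor of a cube. -/
def ancestor (m : ℕ) (Q : DyadicCube d) : DyadicCube d := parent^[m] Q

/-- `Q.In P`: `Q` is a dyadic subcube of `P`. -/
def In (Q P : DyadicCube d) : Prop := P.gen ≤ Q.gen ∧ Q.toSet ⊆ P.toSet

/-- Average of a nonnegative (extended-real-valued) function over a cube. -/
def avg (Q : DyadicCube d) (f : (Fin d → ℝ) → ℝ≥0∞) : ℝ≥0∞ :=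
  (∫⁻ x in Q.toSet, f x) / Q.vol

/-- Average of a real-valued function over a cube. -/
def avgR (Q : DyadicCube d) (f : (Fin d → ℝ) → ℝ) : ℝ :=
  (∫ x in Q.toSet, f x) / (Q.vol).toReal

/-- `α` is a Carleson sequence on `𝒟(P₀)` with constant `C`. -/
def Carleson (P₀ : DyadicCube d) (α : DyadicCube d → ℝ≥0∞) (C : ℝ≥0∞) : Prop :=
  ∀ P : DyadicCube d, P.In P₀ →
    ∑' Q : {Q : DyadicCube d // Q.In P}, α Q.1 * Q.1.vol ≤ C * P.vol

/-- Real-valued version of the Carleson condition. -/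
def CarlesonR (P₀ : DyadicCube d) (α : DyadicCube d → ℝ) (C : ℝ) : Prop :=
  ∀ P : DyadicCube d, P.In P₀ →
    ∑' Q : {Q : DyadicCube d // Q.In P}, α Q.1 * (Q.1.vol).toReal ≤ C * (P.vol).toReal

/-- `η`-sparse collection of dyadic cubes. -/
def Sparse (η : ℝ≥0∞) (S : Set (DyadicCube d)) : Prop :=
  ∃ E : DyadicCube d → Set (Fin d → ℝ),
    (∀ Q ∈ S, MeasurableSet (E Q) ∧ E Q ⊆ Q.toSet ∧ η * Q.vol ≤ volume (E Q)) ∧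
    S.Pairwise fun Q Q' => Disjoint (E Q) (E Q')

/-- The `k`-linear positive dyadic shift of complexity `m` on `𝒟(P₀)`. -/
def shift (P₀ : DyadicCube d) (α : DyadicCube d → ℝ≥0∞) (m : ℕ) {k : ℕ}
    (f : Fin k → (Fin d → ℝ) → ℝ≥0∞) (x : Fin d → ℝ) : ℝ≥0∞ :=
  ∑' Q : {Q : DyadicCube d // Q.In P₀ ∧ P₀.gen + m ≤ Q.gen},
    α Q.1 * (∏ i, (ancestor m Q.1).avg (f i)) * Q.1.toSet.indicator 1 x

/-- The sliced shift `𝒜^{m;0}_{P,α}`, summing only over generations `jm`, `j ≥ 1`,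
relative to `P`. -/
def slicedShift (P : DyadicCube d) (α : DyadicCube d → ℝ≥0∞) (m : ℕ) {k : ℕ}
    (f : Fin k → (Fin d → ℝ) → ℝ≥0∞) (x : Fin d → ℝ) : ℝ≥0∞ :=
  ∑' Q : {Q : DyadicCube d // Q.In P ∧ ∃ j : ℕ, 1 ≤ j ∧ Q.gen = P.gen + j * m},
    α Q.1 * (∏ i, (ancestor m Q.1).avg (f i)) * Q.1.toSet.indicator 1 x

/-- Real-valued `k`-linear positive dyadic shift of complexity `m`. -/
def shiftR (P₀ : DyadicCube d) (α : DyadicCube d → ℝ) (m : ℕ) {k : ℕ}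
    (f : Fin k → (Fin d → ℝ) → ℝ) (x : Fin d → ℝ) : ℝ :=
  ∑' Q : {Q : DyadicCube d // Q.In P₀ ∧ P₀.gen + m ≤ Q.gen},
    α Q.1 * (∏ i, (ancestor m Q.1).avgR (f i)) * Q.1.toSet.indicator 1 x

/-- Real-valued sliced shift `𝒜^{m;0}_{P,α}`. -/
def slicedShiftR (P : DyadicCube d) (α : DyadicCube d → ℝ) (m : ℕ) {k : ℕ}
    (f : Fin k → (Fin d → ℝ) → ℝ) (x : Fin d → ℝ) : ℝ :=
  ∑' Q : {Q : DyadicCube d // Q.In P ∧ ∃ j : ℕ, 1 ≤ j ∧ Q.gen = P.gen + j * m},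
    α Q.1 * (∏ i, (ancestor m Q.1).avgR (f i)) * Q.1.toSet.indicator 1 x

/-- The positive sparse operator `𝒜⁰_𝒮`. -/
def sparseOp (S : Set (DyadicCube d)) {k : ℕ}
    (f : Fin k → (Fin d → ℝ) → ℝ≥0∞) (x : Fin d → ℝ) : ℝ≥0∞ :=
  ∑' Q : S, (∏ i, (Q : DyadicCube d).avg (f i)) * (Q : DyadicCube d).toSet.indicator 1 x

end DyadicCube

open DyadicCube

/-!
Stopping time from `P₀`: the children of a stopping cube `P` are the maximal proper subcubes
`Q` with `⟨f_i⟩_Q > 4k ⟨f_i⟩_P` for some `i`, or with `∑_{Q ≤ R ≤ P} α_R > 4A`. Chebyshev's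
inequality and the Carleson condition show that the children cover at most half of `P`, so
the stopping cubes are `1/2`-sparse.

If `π R` is the smallest stopping cube containing `R`, then `⟨f_i⟩_R ≤ 4k ⟨f_i⟩_{π R}`, so
the shift at `x` is at most `(4k)^k ∑_P ∏_i ⟨f_i⟩_P ∑ α_Q`, the inner sum running over the
cubes `Q ∋ x` with `π Q^{(m)} = P`. For these `Q` the stopping cube `π Q` takes at most `m + 1`
values, and the cubes through `x` with a common value of `π` form a chain of `α`-mass at most
`4A`. This gives the factor `4 (m + 1) A`.
-/

theorem Set.encard_le_of_forall_lt_add {s : Set ℤ} {m : ℕ} (h : ∀ a ∈ s, ∀ b ∈ s, a < b + m) :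
    s.encard ≤ m := by
  rcases s.eq_empty_or_nonempty with rfl | ⟨a, ha⟩
  · simp
  obtain ⟨g, hg, hgle⟩ := Int.exists_least_of_bdd ⟨a - m, fun b hb => by linarith [h a ha b hb]⟩
    ⟨a, ha⟩
  calc s.encard ≤ (Finset.Ico g (g + m) : Set ℤ).encard :=
        encard_le_encard fun b hb => by simpa using ⟨hgle b hb, h b hb g hg⟩
    _ = m := by rw [encard_coe_eq_coe_finsetCard, Int.card_Ico]; simp

namespace DyadicCube

variable {d : ℕ}

theorem mem_toSet_iff {Q : DyadicCube d} {x : Fin d → ℝ} :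
    x ∈ Q.toSet ↔ ∀ i, ⌊x i * 2 ^ Q.gen⌋ = Q.pos i := by
  have h2 : (0 : ℝ) < 2 ^ Q.gen := by positivity
  simp only [toSet, mem_ofPred_eq, Int.floor_eq_iff, zpow_neg, ← div_eq_mul_inv,
    div_le_iff₀ h2, lt_div_iff₀ h2]

theorem toSet_eq_pi (Q : DyadicCube d) :
    Q.toSet = univ.pi fun i =>
      Ico ((Q.pos i : ℝ) * 2 ^ (-Q.gen)) ((Q.pos i + 1) * 2 ^ (-Q.gen)) := by
  ext x
  simp [toSet]

theorem measurableSet_toSet (Q : DyadicCube d) : MeasurableSet Q.toSet := by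
  rw [toSet_eq_pi]
  exact .univ_pi fun _ => measurableSet_Ico

theorem vol_eq (Q : DyadicCube d) : Q.vol = ENNReal.ofReal (2 ^ (-Q.gen)) ^ d := by
  simp [vol, toSet_eq_pi, volume_pi_pi, Real.volume_Ico, add_mul]

theorem vol_ne_zero (Q : DyadicCube d) : Q.vol ≠ 0 := by
  rw [vol_eq]
  exact pow_ne_zero _ (ENNReal.ofReal_pos.2 (by positivity)).ne'

theorem vol_ne_top (Q : DyadicCube d) : Q.vol ≠ ⊤ := by
  rw [vol_eq]
  exact ENNReal.pow_ne_top ENNReal.ofReal_ne_top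

theorem nonempty_toSet (Q : DyadicCube d) : Q.toSet.Nonempty :=
  ⟨fun i => Q.pos i * 2 ^ (-Q.gen), mem_toSet_iff.2 fun i => by
    rw [mul_assoc, ← zpow_add₀ two_ne_zero, neg_add_cancel, zpow_zero, mul_one, Int.floor_intCast]⟩

theorem eq_of_mem_of_mem {Q P : DyadicCube d} {x : Fin d → ℝ} (hQ : x ∈ Q.toSet)
    (hP : x ∈ P.toSet) (h : Q.gen = P.gen) : Q = P := by
  rw [mem_toSet_iff] at hQ hP
  cases Q; cases P
  simp only at h
  subst h
  congr
  funext i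
  exact (hQ i).symm.trans (hP i)

theorem toSet_subset_parent (Q : DyadicCube d) : Q.toSet ⊆ Q.parent.toSet := by
  intro x hx
  rw [mem_toSet_iff] at hx ⊢
  intro i
  have : x i * 2 ^ Q.parent.gen = x i * 2 ^ Q.gen / (2 : ℕ) := by
    rw [parent, zpow_sub₀ two_ne_zero, zpow_one]; push_cast; ring
  rw [this, Int.floor_div_natCast, hx]
  exact (Int.fdiv_eq_ediv_of_nonneg _ zero_le_two).symm

theorem gen_ancestor (m : ℕ) (Q : DyadicCube d) : (ancestor m Q).gen = Q.gen - m := by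
  induction m with
  | zero => simp [ancestor]
  | succ n ih =>
    rw [ancestor, Function.iterate_succ_apply', ← ancestor, parent, ih]
    push_cast; ring

theorem toSet_subset_ancestor (m : ℕ) (Q : DyadicCube d) :
    Q.toSet ⊆ (ancestor m Q).toSet := by
  induction m with
  | zero => rfl
  | succ n ih =>
    rw [ancestor, Function.iterate_succ_apply', ← ancestor]
    exact ih.trans (toSet_subset_parent _)

theorem toSet_subset_of_mem_of_mem {Q P : DyadicCube d} {x : Fin d → ℝ} (hQ : x ∈ Q.toSet)
    (hP : x ∈ P.toSet) (h : P.gen ≤ Q.gen) : Q.toSet ⊆ P.toSet := by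
  obtain ⟨m, hm⟩ := Int.eq_ofNat_of_zero_le (sub_nonneg.2 h)
  have hanc : ancestor m Q = P :=
    eq_of_mem_of_mem (toSet_subset_ancestor m Q hQ) hP (by rw [gen_ancestor]; omega)
  exact hanc ▸ toSet_subset_ancestor m Q

instance : PartialOrder (DyadicCube d) where
  le Q P := Q.In P
  le_refl Q := ⟨le_rfl, subset_rfl⟩
  le_trans _ _ _ h₁ h₂ := ⟨h₂.1.trans h₁.1, h₁.2.trans h₂.2⟩
  le_antisymm Q P h₁ h₂ :=
    have ⟨_, hx⟩ := Q.nonempty_toSet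
    eq_of_mem_of_mem hx (h₁.2 hx) (le_antisymm h₂.1 h₁.1)

theorem le_of_mem_of_mem {Q P : DyadicCube d} {x : Fin d → ℝ} (hQ : x ∈ Q.toSet)
    (hP : x ∈ P.toSet) (h : P.gen ≤ Q.gen) : Q ≤ P :=
  ⟨h, toSet_subset_of_mem_of_mem hQ hP h⟩

theorem le_total_of_mem {Q P : DyadicCube d} {x : Fin d → ℝ} (hQ : x ∈ Q.toSet)
    (hP : x ∈ P.toSet) : Q ≤ P ∨ P ≤ Q :=
  (le_total P.gen Q.gen).imp (le_of_mem_of_mem hQ hP) (le_of_mem_of_mem hP hQ)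

theorem gen_lt_of_lt {Q P : DyadicCube d} (h : Q < P) : P.gen < Q.gen := by
  refine h.le.1.lt_of_ne fun hg => h.ne ?_
  have ⟨_, hx⟩ := Q.nonempty_toSet
  exact eq_of_mem_of_mem hx (h.le.2 hx) hg.symm

theorem le_ancestor (m : ℕ) (Q : DyadicCube d) : Q ≤ ancestor m Q :=
  ⟨by rw [gen_ancestor]; omega, toSet_subset_ancestor m Q⟩

theorem ancestor_le {Q P : DyadicCube d} {m : ℕ} (hQ : Q ≤ P) (hm : P.gen + m ≤ Q.gen) :
    ancestor m Q ≤ P := by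
  have ⟨_, hx⟩ := Q.nonempty_toSet
  exact le_of_mem_of_mem (toSet_subset_ancestor m Q hx) (hQ.2 hx) (by rw [gen_ancestor]; omega)

instance : Countable (DyadicCube d) :=
  Function.Injective.countable (f := fun Q : DyadicCube d => (Q.gen, Q.pos))
    fun ⟨_, _⟩ ⟨_, _⟩ h => by simpa using h

theorem lintegral_eq_avg_mul (Q : DyadicCube d) (g : (Fin d → ℝ) → ℝ≥0∞) :
    ∫⁻ x in Q.toSet, g x = Q.avg g * Q.vol :=
  (ENNReal.div_mul_cancel Q.vol_ne_zero Q.vol_ne_top).symm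

theorem avg_ne_top {Q P : DyadicCube d} {g : (Fin d → ℝ) → ℝ≥0∞} (h : Q ≤ P)
    (hg : ∫⁻ x in P.toSet, g x < ⊤) : Q.avg g ≠ ⊤ :=
  ENNReal.div_ne_top ((lintegral_mono_set h.2).trans_lt hg).ne Q.vol_ne_zero

theorem avg_eq_zero_of_le {Q P : DyadicCube d} {g : (Fin d → ℝ) → ℝ≥0∞} (h : Q ≤ P)
    (hP : P.avg g = 0) : Q.avg g = 0 := by
  simp only [avg, ENNReal.div_eq_zero_iff, vol_ne_top, or_false] at hP ⊢
  exact le_antisymm (hP ▸ lintegral_mono_set h.2) bot_le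

theorem tsum_lintegral_le {B : Set (DyadicCube d)} {R : DyadicCube d}
    (hB : B.PairwiseDisjoint toSet) (hBR : ∀ Q ∈ B, Q ≤ R) (g : (Fin d → ℝ) → ℝ≥0∞) :
    ∑' Q : B, ∫⁻ x in (Q : DyadicCube d).toSet, g x ≤ ∫⁻ x in R.toSet, g x := by
  rw [← lintegral_biUnion B.to_countable (fun Q _ => Q.measurableSet_toSet) hB]
  exact lintegral_mono_set (iUnion₂_subset fun Q hQ => (hBR Q hQ).2)

theorem tsum_vol_le {B : Set (DyadicCube d)} {R : DyadicCube d}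
    (hB : B.PairwiseDisjoint toSet) (hBR : ∀ Q ∈ B, Q ≤ R) :
    ∑' Q : B, (Q : DyadicCube d).vol ≤ R.vol := by
  simpa [vol] using tsum_lintegral_le hB hBR 1

theorem mul_tsum_vol_le_lintegral {B : Set (DyadicCube d)} {R : DyadicCube d}
    (hB : B.PairwiseDisjoint toSet) (hBR : ∀ Q ∈ B, Q ≤ R) {g : (Fin d → ℝ) → ℝ≥0∞}
    {c : ℝ≥0∞} (hc : ∀ Q ∈ B, c ≤ Q.avg g) :
    c * ∑' Q : B, (Q : DyadicCube d).vol ≤ ∫⁻ x in R.toSet, g x :=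
  calc c * ∑' Q : B, (Q : DyadicCube d).vol
      = ∑' Q : B, c * (Q : DyadicCube d).vol := ENNReal.tsum_mul_left.symm
    _ ≤ ∑' Q : B, ∫⁻ x in (Q : DyadicCube d).toSet, g x := ENNReal.tsum_le_tsum fun Q => by
        rw [lintegral_eq_avg_mul]
        exact mul_le_mul_left (hc Q Q.2) _
    _ ≤ ∫⁻ x in R.toSet, g x := tsum_lintegral_le hB hBR g

def chainSum (α : DyadicCube d → ℝ≥0∞) (Q P : DyadicCube d) : ℝ≥0∞ :=
  ∑' R : Icc Q P, α R

theorem chainSum_self (α : DyadicCube d → ℝ≥0∞) (P : DyadicCube d) : chainSum α P P = α P := by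
  rw [chainSum, Icc_self, tsum_singleton]

theorem le_of_carleson {P₀ : DyadicCube d} {α : DyadicCube d → ℝ≥0∞} {A : ℝ≥0∞}
    (hC : Carleson P₀ α A) {Q : DyadicCube d} (hQ : Q ≤ P₀) : α Q ≤ A := by
  have h := (ENNReal.le_tsum (⟨Q, le_refl Q⟩ : {R : DyadicCube d // R.In Q})).trans (hC Q hQ)
  exact (ENNReal.mul_le_mul_iff_left Q.vol_ne_zero Q.vol_ne_top).1 h

theorem mul_tsum_vol_le_of_carleson {P₀ : DyadicCube d} {α : DyadicCube d → ℝ≥0∞}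
    {A : ℝ≥0∞} (hC : Carleson P₀ α A) {R : DyadicCube d} (hR : R ≤ P₀)
    {B : Set (DyadicCube d)} (hB : B.PairwiseDisjoint toSet)
    {c : ℝ≥0∞} (hc : ∀ Q ∈ B, c ≤ chainSum α Q R) :
    c * ∑' Q : B, (Q : DyadicCube d).vol ≤ A * R.vol := by
  classical
  let w : DyadicCube d → DyadicCube d → ℝ≥0∞ := fun Q S =>
    if Q ∈ B ∧ Q ≤ S ∧ S ≤ R then α S * Q.vol else 0
  have hQ : ∀ Q, B.indicator (fun Q => c * Q.vol) Q ≤ ∑' S, w Q S := by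
    intro Q
    by_cases hQB : Q ∈ B
    · calc B.indicator (fun Q => c * Q.vol) Q ≤ chainSum α Q R * Q.vol := by
            rw [indicator_of_mem hQB]; exact mul_le_mul_left (hc Q hQB) _
        _ = ∑' S, w Q S := by
            rw [chainSum, ← ENNReal.tsum_mul_right, tsum_subtype (Icc Q R) (α · * Q.vol)]
            simp [w, indicator_apply, hQB]
    · simp [hQB]
  have hS : ∀ S, ∑' Q, w Q S ≤ if S ≤ R then α S * S.vol else 0 := by
    intro S
    split_ifs with hSR
    · calc ∑' Q, w Q S = α S * ∑' Q : ↥(B ∩ Iic S), (Q : DyadicCube d).vol := by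
            rw [← ENNReal.tsum_mul_left, tsum_subtype (B ∩ Iic S) (α S * vol ·)]
            simp [w, indicator_apply, hSR]
        _ ≤ α S * S.vol :=
            mul_le_mul_right (tsum_vol_le (hB.subset inter_subset_left) fun Q hQ => hQ.2) _
    · simp [w, hSR]
  calc c * ∑' Q : B, (Q : DyadicCube d).vol
      = ∑' Q, B.indicator (fun Q => c * Q.vol) Q := by
        rw [← ENNReal.tsum_mul_left, tsum_subtype B (c * vol ·)]
    _ ≤ ∑' Q, ∑' S, w Q S := ENNReal.tsum_le_tsum hQ
    _ = ∑' S, ∑' Q, w Q S := ENNReal.tsum_comm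
    _ ≤ ∑' S, if S ≤ R then α S * S.vol else 0 := ENNReal.tsum_le_tsum hS
    _ = ∑' S : {S : DyadicCube d // S.In R}, α S * S.1.vol := by
        refine ((tsum_subtype {S | S ≤ R} fun S => α S * S.vol).trans ?_).symm
        simp [indicator_apply]
    _ ≤ A * R.vol := hC R hR

theorem exists_isLeast_of_le {p : DyadicCube d → Prop} {Q : DyadicCube d}
    (h : ∃ R, p R ∧ Q ≤ R) : ∃ R, IsLeast {R | p R ∧ Q ≤ R} R := by
  obtain ⟨x, hx⟩ := Q.nonempty_toSet
  obtain ⟨_, ⟨R, hR, rfl⟩, hmax⟩ :=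
    Int.exists_greatest_of_bdd (P := fun n => ∃ R, (p R ∧ Q ≤ R) ∧ R.gen = n)
      ⟨Q.gen, fun _ ⟨_, hR, hg⟩ => hg ▸ hR.2.1⟩ (h.elim fun R hR => ⟨_, R, hR, rfl⟩)
  exact ⟨R, hR, fun R' hR' => le_of_mem_of_mem (hR.2.2 hx) (hR'.2.2 hx) (hmax _ ⟨R', hR', rfl⟩)⟩

theorem exists_isGreatest_of_le {p : DyadicCube d → Prop} {Q : DyadicCube d}
    (h : ∃ R, p R ∧ Q ≤ R) {g : ℤ} (hg : ∀ R, p R → g ≤ R.gen) :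
    ∃ R, IsGreatest {R | p R ∧ Q ≤ R} R := by
  obtain ⟨x, hx⟩ := Q.nonempty_toSet
  obtain ⟨_, ⟨R, hR, rfl⟩, hmin⟩ :=
    Int.exists_least_of_bdd (P := fun n => ∃ R, (p R ∧ Q ≤ R) ∧ R.gen = n)
      ⟨g, fun _ ⟨R, hR, hR'⟩ => hR' ▸ hg R hR.1⟩ (h.elim fun R hR => ⟨_, R, hR, rfl⟩)
  exact ⟨R, hR, fun R' hR' => le_of_mem_of_mem (hR'.2.2 hx) (hR.2.2 hx) (hmin _ ⟨R', hR', rfl⟩)⟩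

variable {k : ℕ} {P₀ P Q : DyadicCube d} {α : DyadicCube d → ℝ≥0∞} {A : ℝ≥0∞}
  {f : Fin k → (Fin d → ℝ) → ℝ≥0∞}

variable (α A f) in
/-- The thresholds `4k` and `4A` make the children of each kind cover at most `|P| / 4`. -/
def Bad (P Q : DyadicCube d) : Prop :=
  Q < P ∧ ((∃ i, 4 * k * P.avg (f i) < Q.avg (f i)) ∨ 4 * A < chainSum α Q P)

variable (α A f) in
def children (P : DyadicCube d) : Set (DyadicCube d) := {Q | Maximal (Bad α A f P) Q}

variable (P₀ α A f) in
inductive Stop : DyadicCube d → Prop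
  | base : Stop P₀
  | child {P Q : DyadicCube d} : Stop P → Q ∈ children α A f P → Stop Q

theorem exists_mem_children_of_bad (h : Bad α A f P Q) : ∃ R ∈ children α A f P, Q ≤ R := by
  obtain ⟨R, ⟨hR, hQR⟩, hmax⟩ :=
    exists_isGreatest_of_le ⟨Q, h, le_rfl⟩ fun R hR => (gen_lt_of_lt hR.1).le
  exact ⟨R, ⟨hR, fun R' hR' hRR' => hmax ⟨hR', hQR.trans hRR'⟩⟩, hQR⟩

theorem pairwiseDisjoint_children : (children α A f P).PairwiseDisjoint toSet := by
  intro Q hQ Q' hQ' hne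
  refine not_not.1 fun hd => hne ?_
  obtain ⟨x, hxQ, hxQ'⟩ := not_disjoint_iff.1 hd
  rcases le_total_of_mem hxQ hxQ' with h | h
  · exact hQ.eq_of_le hQ'.prop h
  · exact (hQ'.eq_of_le hQ.prop h).symm

theorem Stop.le (h : Stop P₀ α A f P) : P ≤ P₀ := by
  induction h with
  | base => exact le_rfl
  | child _ hQ ih => exact hQ.prop.1.le.trans ih

theorem Stop.exists_mem_children_of_lt (hP : Stop P₀ α A f P) (hQ : Stop P₀ α A f Q)
    (hQP : Q < P) : ∃ C ∈ children α A f P, Q ≤ C := by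
  obtain ⟨n, hn⟩ : ∃ n, (Q.gen - P₀.gen).toNat = n := ⟨_, rfl⟩
  induction n using Nat.strong_induction_on generalizing P Q with
  | _ n ih =>
  cases hQ with
  | base => exact absurd hQP (not_lt_of_ge hP.le)
  | @child Pp _ hPp hQc =>
    have hgen := gen_lt_of_lt hQc.prop.1
    have hgen' := gen_lt_of_lt hQP
    have hPp₀ := hPp.le.1
    have hP₀ := hP.le.1
    obtain ⟨x, hx⟩ := Q.nonempty_toSet
    rcases le_total_of_mem (hQc.prop.1.le.2 hx) (hQP.le.2 hx) with hPpP | hPPp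
    · rcases hPpP.eq_or_lt with rfl | hlt
      · exact ⟨Q, hQc, le_rfl⟩
      · obtain ⟨C, hC, hPpC⟩ := ih _ (by omega) hP hPp hlt rfl
        exact ⟨C, hC, hQc.prop.1.le.trans hPpC⟩
    · rcases hPPp.eq_or_lt with rfl | hlt
      · exact ⟨Q, hQc, le_rfl⟩
      · obtain ⟨C, hC, hPC⟩ := ih _ (by omega) hPp hP hlt rfl
        have hQC : Q = C := hQc.eq_of_le hC.prop (hQP.le.trans hPC)
        exact absurd (hQC ▸ hPC) (not_le_of_gt hQP)

variable (P₀ α A f) in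
open Classical in
def stoppingParent (Q : DyadicCube d) : DyadicCube d :=
  if h : Q ≤ P₀ then (exists_isLeast_of_le (p := Stop P₀ α A f) ⟨P₀, .base, h⟩).choose else P₀

theorem isLeast_stoppingParent (hQ : Q ≤ P₀) :
    IsLeast {P | Stop P₀ α A f P ∧ Q ≤ P} (stoppingParent P₀ α A f Q) := by
  rw [stoppingParent, dif_pos hQ]
  exact Classical.choose_spec _

theorem not_bad_stoppingParent (hQ : Q ≤ P₀) : ¬ Bad α A f (stoppingParent P₀ α A f Q) Q := by
  intro h
  have ⟨⟨hstop, _⟩, hleast⟩ := isLeast_stoppingParent (α := α) (A := A) (f := f) hQ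
  obtain ⟨R, hR, hQR⟩ := exists_mem_children_of_bad h
  exact not_le_of_gt hR.prop.1 (hleast ⟨hstop.child hR, hQR⟩)

theorem tsum_vol_children_avg_le (i : Fin k) (hfin : ∫⁻ x in P₀.toSet, f i x < ⊤) (hP : P ≤ P₀) :
    ∑' Q : ↥(children α A f P ∩ {Q | 4 * k * P.avg (f i) < Q.avg (f i)}),
      (Q : DyadicCube d).vol ≤ P.vol / (4 * k) := by
  set a := P.avg (f i)
  by_cases ha : a = 0
  · have : children α A f P ∩ {Q | 4 * k * a < Q.avg (f i)} = ∅ :=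
      eq_empty_of_forall_notMem fun Q ⟨hQ, hlt⟩ => by
        simp [avg_eq_zero_of_le hQ.prop.1.le ha, ha] at hlt
    rw [this, tsum_empty]
    exact zero_le
  have hcheb := mul_tsum_vol_le_lintegral
    (B := children α A f P ∩ {Q | 4 * k * a < Q.avg (f i)})
    (pairwiseDisjoint_children.subset inter_subset_left)
    (fun Q hQ => hQ.1.prop.1.le) (c := 4 * k * a) fun Q hQ => hQ.2.le
  rw [lintegral_eq_avg_mul, mul_comm _ P.vol] at hcheb
  rw [ENNReal.le_div_iff_mul_le (.inr P.vol_ne_zero) (.inr P.vol_ne_top), mul_comm]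
  refine (ENNReal.mul_le_mul_iff_right ha (avg_ne_top hP hfin)).1 ?_
  convert hcheb using 1 <;> ring

theorem tsum_vol_children_chainSum_le (hC : Carleson P₀ α A) (hP : P ≤ P₀) :
    ∑' Q : ↥(children α A f P ∩ {Q | 4 * A < chainSum α Q P}), (Q : DyadicCube d).vol
      ≤ P.vol / 4 := by
  by_cases hA : A = 0 ∨ A = ⊤
  · have : children α A f P ∩ {Q | 4 * A < chainSum α Q P} = ∅ := by
      refine eq_empty_of_forall_notMem fun Q ⟨_, hlt⟩ => ?_
      rcases hA with rfl | rfl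
      · have : chainSum α Q P = 0 := ENNReal.tsum_eq_zero.2 fun R =>
          nonpos_iff_eq_zero.1 (le_of_carleson hC (R.2.2.trans hP))
        simp [this] at hlt
      · simp at hlt
    rw [this, tsum_empty]
    exact zero_le
  push Not at hA
  have hcarl := mul_tsum_vol_le_of_carleson hC hP
    (B := children α A f P ∩ {Q | 4 * A < chainSum α Q P})
    (pairwiseDisjoint_children.subset inter_subset_left) (c := 4 * A) fun Q hQ => hQ.2.le
  rw [ENNReal.le_div_iff_mul_le (.inr P.vol_ne_zero) (.inr P.vol_ne_top), mul_comm]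
  refine (ENNReal.mul_le_mul_iff_right hA.1 hA.2).1 ?_
  convert hcarl using 1; ring

theorem tsum_vol_children_le (hC : Carleson P₀ α A) (hfin : ∀ i, ∫⁻ x in P₀.toSet, f i x < ⊤)
    (hP : P ≤ P₀) : ∑' Q : children α A f P, (Q : DyadicCube d).vol ≤ P.vol / 2 := by
  have hsub : children α A f P ⊆
      (⋃ i, children α A f P ∩ {Q | 4 * k * P.avg (f i) < Q.avg (f i)}) ∪
        (children α A f P ∩ {Q | 4 * A < chainSum α Q P}) := by
    intro Q hQ
    rcases hQ.prop.2 with ⟨i, hi⟩ | hc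
    · exact .inl (mem_iUnion.2 ⟨i, hQ, hi⟩)
    · exact .inr ⟨hQ, hc⟩
  have hk_mul : (k : ℝ≥0∞) * (P.vol / (4 * k)) ≤ P.vol / 4 := by
    rcases eq_or_ne k 0 with rfl | hk
    · simp
    rw [← mul_div_assoc, mul_comm 4, ENNReal.mul_div_mul_left _ _ (by simpa) (by simp)]
  calc ∑' Q : children α A f P, (Q : DyadicCube d).vol
      ≤ ∑ i, ∑' Q : ↥(children α A f P ∩ {Q | 4 * k * P.avg (f i) < Q.avg (f i)}),
          (Q : DyadicCube d).vol +
        ∑' Q : ↥(children α A f P ∩ {Q | 4 * A < chainSum α Q P}), (Q : DyadicCube d).vol :=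
        (ENNReal.tsum_mono_subtype _ hsub).trans <| (ENNReal.tsum_union_le _ _ _).trans <|
          add_le_add_left (ENNReal.tsum_iUnion_le _ _) _
    _ ≤ ∑ _i : Fin k, P.vol / (4 * k) + P.vol / 4 :=
        add_le_add (Finset.sum_le_sum fun i _ => tsum_vol_children_avg_le i (hfin i) hP)
          (tsum_vol_children_chainSum_le hC hP)
    _ ≤ P.vol / 4 + P.vol / 4 := by
        rw [Finset.sum_const, Finset.card_univ, Fintype.card_fin, nsmul_eq_mul]
        exact add_le_add_left hk_mul _
    _ = P.vol / 2 := by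
        rw [ENNReal.div_add_div_same, ← two_mul, show (4 : ℝ≥0∞) = 2 * 2 by norm_num,
          ENNReal.mul_div_mul_left _ _ two_ne_zero ofNat_ne_top]

variable (α A f) in
def remainder (P : DyadicCube d) : Set (Fin d → ℝ) :=
  P.toSet \ ⋃ Q ∈ children α A f P, Q.toSet

theorem half_vol_le_volume_remainder (hC : Carleson P₀ α A)
    (hfin : ∀ i, ∫⁻ x in P₀.toSet, f i x < ⊤) (hP : P ≤ P₀) :
    1 / 2 * P.vol ≤ volume (remainder α A f P) :=
  calc 1 / 2 * P.vol = P.vol - P.vol / 2 := by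
        rw [ENNReal.sub_half P.vol_ne_top, one_div, ENNReal.div_eq_inv_mul]
    _ ≤ P.vol - volume (⋃ Q ∈ children α A f P, Q.toSet) :=
        tsub_le_tsub_left ((measure_biUnion_le _ (to_countable _) _).trans
          (tsum_vol_children_le hC hfin hP)) _
    _ ≤ volume (remainder α A f P) := le_measure_sdiff

theorem disjoint_remainder_of_lt (hP : Stop P₀ α A f P) (hQ : Stop P₀ α A f Q) (h : Q < P) :
    Disjoint (remainder α A f Q) (remainder α A f P) := by
  obtain ⟨C, hC, hQC⟩ := hP.exists_mem_children_of_lt hQ h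
  exact disjoint_left.2 fun x hxQ hxP => hxP.2 (mem_biUnion hC (hQC.2 hxQ.1))

theorem sparse_setOf_stop (hC : Carleson P₀ α A) (hfin : ∀ i, ∫⁻ x in P₀.toSet, f i x < ⊤) :
    Sparse (1 / 2) {P | Stop P₀ α A f P} := by
  refine ⟨remainder α A f,
    fun P hP => ⟨?_, sdiff_subset, half_vol_le_volume_remainder hC hfin hP.le⟩,
    fun P hP Q hQ hne => ?_⟩
  · exact P.measurableSet_toSet.diff (.biUnion (to_countable _) fun Q _ => Q.measurableSet_toSet)
  by_cases hd : Disjoint P.toSet Q.toSet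
  · exact hd.mono sdiff_subset sdiff_subset
  obtain ⟨x, hxP, hxQ⟩ := not_disjoint_iff.1 hd
  rcases le_total_of_mem hxP hxQ with h | h
  · exact disjoint_remainder_of_lt hQ hP (h.lt_of_ne hne)
  · exact (disjoint_remainder_of_lt hP hQ (h.lt_of_ne hne.symm)).symm

theorem avg_le_of_not_bad (hQP : Q ≤ P) (h : ¬ Bad α A f P Q) (i : Fin k) :
    Q.avg (f i) ≤ 4 * k * P.avg (f i) := by
  rcases hQP.eq_or_lt with rfl | hlt
  · have := i.pos
    refine le_mul_of_one_le_left zero_le ?_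
    exact_mod_cast (by omega : 1 ≤ 4 * k)
  · exact not_lt.1 fun hi => h ⟨hlt, .inl ⟨i, hi⟩⟩

theorem chainSum_le_of_not_bad (hC : Carleson P₀ α A) (hP : P ≤ P₀) (hQP : Q ≤ P)
    (h : ¬ Bad α A f P Q) : chainSum α Q P ≤ 4 * A := by
  rcases hQP.eq_or_lt with rfl | hlt
  · rw [chainSum_self]
    exact (le_of_carleson hC hP).trans (le_mul_of_one_le_left zero_le (by norm_num))
  · exact not_lt.1 fun hc => h ⟨hlt, .inr hc⟩

theorem prod_avg_le_stoppingParent (hQ : Q ≤ P₀) :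
    ∏ i, Q.avg (f i) ≤ (4 * k) ^ k * ∏ i, (stoppingParent P₀ α A f Q).avg (f i) :=
  calc ∏ i, Q.avg (f i) ≤ ∏ i, 4 * k * (stoppingParent P₀ α A f Q).avg (f i) :=
        Finset.prod_le_prod' fun i _ => avg_le_of_not_bad
          (isLeast_stoppingParent hQ).1.2 (not_bad_stoppingParent hQ) i
    _ = (4 * k) ^ k * ∏ i, (stoppingParent P₀ α A f Q).avg (f i) := by
        rw [Finset.prod_mul_distrib, Finset.prod_const, Finset.card_univ, Fintype.card_fin]

variable (P₀ α A f) in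
def stoppingFiber (x : Fin d → ℝ) (R : DyadicCube d) : Set (DyadicCube d) :=
  {Q | Q ≤ P₀ ∧ x ∈ Q.toSet ∧ stoppingParent P₀ α A f Q = R}

variable (P₀ α A f) in
def shiftFiber (m : ℕ) (x : Fin d → ℝ) (P : DyadicCube d) : Set (DyadicCube d) :=
  {Q | Q ≤ P₀ ∧ P₀.gen + m ≤ Q.gen ∧ x ∈ Q.toSet ∧ stoppingParent P₀ α A f (ancestor m Q) = P}

theorem stoppingParent_le_of_mem_shiftFiber {m : ℕ} {x : Fin d → ℝ}
    (hQ : Q ∈ shiftFiber P₀ α A f m x P) :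
    stoppingParent P₀ α A f Q ≤ P ∧ x ∈ (stoppingParent P₀ α A f Q).toSet := by
  obtain ⟨hQ₀, hm, hx, hQP⟩ := hQ
  have hanc := isLeast_stoppingParent (α := α) (A := A) (f := f) (ancestor_le hQ₀ hm)
  have hleast := isLeast_stoppingParent (α := α) (A := A) (f := f) hQ₀
  rw [hQP] at hanc
  exact ⟨hleast.2 ⟨hanc.1.1, (le_ancestor m Q).trans hanc.1.2⟩, hleast.1.2.2 hx⟩

theorem gen_ancestor_lt_of_mem_shiftFiber {m : ℕ} {x : Fin d → ℝ} {Q' : DyadicCube d}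
    (hQ : Q ∈ shiftFiber P₀ α A f m x P) (hQ' : Q' ∈ shiftFiber P₀ α A f m x P)
    (hne : stoppingParent P₀ α A f Q ≠ P) :
    (ancestor m Q').gen < (stoppingParent P₀ α A f Q).gen := by
  have ⟨hQP, hxQ⟩ := stoppingParent_le_of_mem_shiftFiber hQ
  refine lt_of_not_ge fun hle => hne (le_antisymm hQP ?_)
  have hanc := isLeast_stoppingParent (α := α) (A := A) (f := f) (ancestor_le hQ'.1 hQ'.2.1)
  rw [hQ'.2.2.2] at hanc
  exact hanc.2 ⟨(isLeast_stoppingParent hQ.1).1.1,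
    le_of_mem_of_mem (toSet_subset_ancestor m Q' hQ'.2.2.1) hxQ hle⟩

/-- Besides `P`, the stopping parents of the cubes in the fiber lie strictly below every
`m`-th ancestor in it, hence within `m` generations of each other. -/
theorem encard_image_shiftFiber_le (m : ℕ) (x : Fin d → ℝ) (P : DyadicCube d) :
    (stoppingParent P₀ α A f '' shiftFiber P₀ α A f m x P).encard ≤ m + 1 := by
  set V := stoppingParent P₀ α A f '' shiftFiber P₀ α A f m x P
  have hinj : InjOn gen (V \ {P}) := by
    rintro _ ⟨⟨Q, hQ, rfl⟩, -⟩ _ ⟨⟨Q', hQ', rfl⟩, -⟩ h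
    exact eq_of_mem_of_mem (stoppingParent_le_of_mem_shiftFiber hQ).2
      (stoppingParent_le_of_mem_shiftFiber hQ').2 h
  have hwin : (gen '' (V \ {P})).encard ≤ m := by
    refine Set.encard_le_of_forall_lt_add ?_
    rintro _ ⟨_, ⟨⟨Q, hQ, rfl⟩, -⟩, rfl⟩ _ ⟨_, ⟨⟨Q', hQ', rfl⟩, hne'⟩, rfl⟩
    have h₁ := gen_ancestor_lt_of_mem_shiftFiber hQ' hQ hne'
    have h₂ := (isLeast_stoppingParent (α := α) (A := A) (f := f) hQ.1).1.2.1
    have h₃ := gen_ancestor m Q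
    omega
  calc V.encard ≤ (V \ {P}).encard + ({P} : Set (DyadicCube d)).encard :=
        encard_le_encard_sdiff_add_encard _ _
    _ ≤ m + 1 := by rw [← hinj.encard_image, encard_singleton]; gcongr

/-- The fiber is a chain below `R` whose deepest member is not bad relative to `R`. -/
theorem tsum_stoppingFiber_le (hC : Carleson P₀ α A) (x : Fin d → ℝ) (R : DyadicCube d) :
    ∑' Q : stoppingFiber P₀ α A f x R, α Q ≤ 4 * A := by
  refine ENNReal.summable.tsum_le_of_sum_le fun t => ?_
  rcases t.eq_empty_or_nonempty with rfl | ht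
  · simp
  obtain ⟨⟨Qm, hQm₀, hxQm, hQmR⟩, hQmt, hmax⟩ := t.exists_max_image (fun Q => Q.1.gen) ht
  have hsub : ↑(t.map (Function.Embedding.subtype _)) ⊆ Icc Qm R := by
    intro _ hQ
    obtain ⟨⟨Q, hQ₀, hxQ, hQR⟩, hQt, rfl⟩ := Finset.mem_map.1 hQ
    exact ⟨le_of_mem_of_mem hxQm hxQ (hmax _ hQt), hQR ▸ (isLeast_stoppingParent hQ₀).1.2⟩
  have ⟨⟨hstop, hQmle⟩, _⟩ := isLeast_stoppingParent (α := α) (A := A) (f := f) hQm₀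
  have hnb := not_bad_stoppingParent (α := α) (A := A) (f := f) hQm₀
  rw [hQmR] at hstop hQmle hnb
  calc ∑ Q ∈ t, α Q = ∑' Q : ↑(t.map (Function.Embedding.subtype _)), α Q := by
        rw [Finset.tsum_subtype, Finset.sum_map]; rfl
    _ ≤ chainSum α Qm R := ENNReal.tsum_mono_subtype _ hsub
    _ ≤ 4 * A := chainSum_le_of_not_bad hC hstop.le hQmle hnb

theorem tsum_shiftFiber_le (hC : Carleson P₀ α A) (m : ℕ) (x : Fin d → ℝ) (P : DyadicCube d) :
    ∑' Q : shiftFiber P₀ α A f m x P, α Q ≤ (m + 1) * (4 * A) := by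
  set V := stoppingParent P₀ α A f '' shiftFiber P₀ α A f m x P
  calc ∑' Q : shiftFiber P₀ α A f m x P, α Q
      ≤ ∑' Q : ↥(⋃ R ∈ V, stoppingFiber P₀ α A f x R), α Q :=
        ENNReal.tsum_mono_subtype _ fun Q hQ =>
          mem_biUnion (mem_image_of_mem _ hQ) ⟨hQ.1, hQ.2.2.1, rfl⟩
    _ ≤ ∑' R : V, ∑' Q : stoppingFiber P₀ α A f x R, α Q := ENNReal.tsum_biUnion_le_tsum _ _ _
    _ ≤ ∑' R : V, 4 * A := ENNReal.tsum_le_tsum fun R => tsum_stoppingFiber_le hC x R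
    _ = V.encard * (4 * A) := ENNReal.tsum_set_const _ _
    _ ≤ (m + 1) * (4 * A) := by
        gcongr
        exact_mod_cast encard_image_shiftFiber_le m x P

theorem shift_le_sparseOp (hC : Carleson P₀ α A) (m : ℕ) (x : Fin d → ℝ) :
    shift P₀ α m f x ≤
      4 * (4 * k) ^ k * (m + 1) * A * sparseOp {P | Stop P₀ α A f P} f x := by
  set π := stoppingParent P₀ α A f
  set S := {P | Stop P₀ α A f P}
  set T := shiftFiber P₀ α A f m x
  have hterm : ∀ Q : {Q : DyadicCube d // Q.In P₀ ∧ P₀.gen + m ≤ Q.gen},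
      α Q * (∏ i, (ancestor m Q.1).avg (f i)) * Q.1.toSet.indicator 1 x ≤
        (4 * k) ^ k * ∑' P : S, (∏ i, P.1.avg (f i)) * P.1.toSet.indicator 1 x *
          (T P).indicator α Q := by
    rintro ⟨Q, hQ₀, hm⟩
    by_cases hx : x ∈ Q.toSet
    · have hanc := isLeast_stoppingParent (α := α) (A := A) (f := f) (ancestor_le hQ₀ hm)
      calc α Q * (∏ i, (ancestor m Q).avg (f i)) * Q.toSet.indicator 1 x
          ≤ α Q * ((4 * k) ^ k * ∏ i, (π (ancestor m Q)).avg (f i)) := by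
            rw [indicator_of_mem hx, Pi.one_apply, mul_one]
            exact mul_le_mul_right (prod_avg_le_stoppingParent (ancestor_le hQ₀ hm)) _
        _ = (4 * k) ^ k * ((∏ i, (π (ancestor m Q)).avg (f i)) *
              (π (ancestor m Q)).toSet.indicator 1 x * (T (π (ancestor m Q))).indicator α Q) := by
            rw [indicator_of_mem (hanc.1.2.2 (toSet_subset_ancestor m Q hx)),
              indicator_of_mem (show Q ∈ T _ from ⟨hQ₀, hm, hx, rfl⟩), Pi.one_apply]
            ring
        _ ≤ _ := mul_le_mul_right (ENNReal.le_tsum (⟨_, hanc.1.1⟩ : S)) _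
    · simp [hx]
  calc shift P₀ α m f x
      ≤ ∑' Q : {Q : DyadicCube d // Q.In P₀ ∧ P₀.gen + m ≤ Q.gen}, (4 * k) ^ k *
          ∑' P : S, (∏ i, P.1.avg (f i)) * P.1.toSet.indicator 1 x * (T P).indicator α Q :=
        ENNReal.tsum_le_tsum hterm
    _ = (4 * k) ^ k * ∑' P : S, (∏ i, P.1.avg (f i)) * P.1.toSet.indicator 1 x *
          ∑' Q : {Q : DyadicCube d // Q.In P₀ ∧ P₀.gen + m ≤ Q.gen}, (T P).indicator α Q := by
        rw [ENNReal.tsum_mul_left, ENNReal.tsum_comm]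
        simp_rw [ENNReal.tsum_mul_left]
    _ ≤ (4 * k) ^ k * ∑' P : S, (∏ i, P.1.avg (f i)) * P.1.toSet.indicator 1 x *
          ((m + 1) * (4 * A)) := by
        gcongr with P
        calc ∑' Q : {Q : DyadicCube d // Q.In P₀ ∧ P₀.gen + m ≤ Q.gen}, (T P).indicator α Q
            ≤ ∑' Q, (T P).indicator α Q :=
              ENNReal.tsum_comp_le_tsum_of_injective Subtype.val_injective _
          _ = ∑' Q : T P, α Q := (tsum_subtype _ _).symm
          _ ≤ (m + 1) * (4 * A) := tsum_shiftFiber_le hC m x P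
    _ = 4 * (4 * k) ^ k * (m + 1) * A * sparseOp S f x := by
        rw [sparseOp, ← ENNReal.tsum_mul_left (a := (4 * k : ℝ≥0∞) ^ k),
          ← ENNReal.tsum_mul_left (a := 4 * (4 * k : ℝ≥0∞) ^ k * (m + 1) * A)]
        congr 1 with P
        ring

end DyadicCube

theorem theoremA_general {d k : ℕ} :
    ∃ C₂ : ℝ≥0∞, 0 < C₂ ∧ C₂ < ⊤ ∧
      ∀ (P₀ : DyadicCube d) (α : DyadicCube d → ℝ≥0∞) (A : ℝ≥0∞), Carleson P₀ α A →
        ∀ (m : ℕ) (f : Fin k → (Fin d → ℝ) → ℝ≥0∞), (∀ i, Measurable (f i)) →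
          (∀ i, ∫⁻ x in P₀.toSet, f i x < ⊤) →
          ∃ S : Set (DyadicCube d), (∀ Q ∈ S, Q.In P₀) ∧ Sparse (1 / 2) S ∧
            ∀ x ∈ P₀.toSet,
              shift P₀ α m f x ≤ C₂ * ((m : ℝ≥0∞) + 1) * A * sparseOp S f x := by
  refine ⟨4 * (4 * k) ^ k, by simp [pos_iff_ne_zero, pow_eq_zero_iff'], by finiteness,
    fun P₀ α A hC m f _ hfin => ⟨{P | Stop P₀ α A f P}, fun _ hP => hP.le,
      sparse_setOf_stop hC hfin, fun x _ => shift_le_sparseOp hC m x⟩⟩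

/-- Theorem A: there is `C₂` depending only on `k` and `d` such that for
every Carleson sequence `α` on `𝒟(P₀)`, every complexity `m ≥ 0` and all nonnegative
integrable `f₁,…,f_k`, there is a sparse `𝒮 ⊆ 𝒟(P₀)` with
`𝒜^m_{P₀,α} f⃗(x) ≤ C₂ (m+1) ‖α‖ Σ_{Q∈𝒮} (∏⟨f_i⟩_Q) 1_Q(x)` on `P₀`. -/
theorem theoremA {d k : ℕ} (hk : 0 < k) :
    ∃ C₂ : ℝ≥0∞, 0 < C₂ ∧ C₂ < ⊤ ∧
      ∀ (P₀ : DyadicCube d) (α : DyadicCube d → ℝ≥0∞) (A : ℝ≥0∞), Carleson P₀ α A →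
        ∀ (m : ℕ) (f : Fin k → (Fin d → ℝ) → ℝ≥0∞), (∀ i, Measurable (f i)) →
          (∀ i, ∫⁻ x in P₀.toSet, f i x < ⊤) →
          ∃ S : Set (DyadicCube d), (∀ Q ∈ S, Q.In P₀) ∧ Sparse (1 / 2) S ∧
            ∀ x ∈ P₀.toSet,
              shift P₀ α m f x ≤ C₂ * ((m : ℝ≥0∞) + 1) * A * sparseOp S f x :=
  theoremA_general
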